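/- arXiv:math/0512465 — 4 statements merged into one kernel-verified Lean document; each statement's English description precedes it below -/
import Mathlib

section
/- Every closed maximal nonnegative subspace L of a Krein space H = H₊ ⊕ H₋ is the graph of a contraction: there exists a bounded operator K : H₊ → H₋ with ‖K‖ ≤ 1 such that L = { (x₊, K x₊) : x₊ ∈ H₊ }. -/
open Submodule

/-- Every closed maximal nonnegative subspace `L` of the Krein
space `H = H₊ ⊕ H₋` (with `[x,x] = ‖x₊‖² - ‖x₋‖²`) is the graph of a
contraction: there is a bounded `K : H₊ → H₋`, `‖K‖ ≤ 1`, with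
`L = {(x₊, K x₊) : x₊ ∈ H₊}`. -/
theorem stmt7 {E F : Type*} [NormedAddCommGroup E] [InnerProductSpace ℂ E] [CompleteSpace E]
    [NormedAddCommGroup F] [InnerProductSpace ℂ F] [CompleteSpace F]
    (L : Submodule ℂ (E × F)) (hclosed : IsClosed (L : Set (E × F)))
    (hnonneg : ∀ x ∈ L, 0 ≤ ‖x.1‖ ^ 2 - ‖x.2‖ ^ 2)
    (hmax : ∀ M : Submodule ℂ (E × F), (∀ x ∈ M, 0 ≤ ‖x.1‖ ^ 2 - ‖x.2‖ ^ 2) →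
      L ≤ M → M = L) :
    ∃ K : E →L[ℂ] F, ‖K‖ ≤ 1 ∧ L = LinearMap.graph (K : E →ₗ[ℂ] F) := by
  have hb : ∀ p : E × F, p ∈ L → ‖p.2‖ ≤ ‖p.1‖ := by
    intro p hp
    nlinarith [hnonneg p hp, norm_nonneg p.1, norm_nonneg p.2]
  have hnormL : ∀ p : E × F, p ∈ L → ‖p‖ = ‖p.1‖ := by
    intro p hp
    rw [Prod.norm_def]
    exact max_eq_left (hb p hp)
  set D := L.map (LinearMap.fst ℂ E F) with hDdef
  haveI : CompleteSpace L := hclosed.completeSpace_coe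
  have hanti : AntilipschitzWith 1 (fun p : L => (p : E × F).1) := by
    apply AntilipschitzWith.of_le_mul_dist
    intro p q
    rw [Subtype.dist_eq, dist_eq_norm, dist_eq_norm, NNReal.coe_one, one_mul]
    exact le_of_eq (hnormL _ (sub_mem p.2 q.2))
  have hucont : UniformContinuous (fun p : L => (p : E × F).1) := by
    exact (LipschitzWith.prod_fst.comp (isometry_subtype_coe.lipschitz)).uniformContinuous
  have hrange : Set.range (fun p : L => (p : E × F).1) = (D : Set E) := by
    ext x
    simp [hDdef, Submodule.mem_map, Set.range]
  have hDclosed : IsClosed (D : Set E) := by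
    rw [← hrange]; exact hanti.isClosed_range hucont
  have hDtop : D = ⊤ := by
    by_contra hne
    haveI : CompleteSpace D := hDclosed.completeSpace_coe
    have hbot : Dᗮ ≠ ⊥ := fun h => hne (Submodule.orthogonal_eq_bot_iff.mp h)
    obtain ⟨e, heD, hene⟩ := Submodule.exists_mem_ne_zero_of_ne_bot hbot
    set M := L ⊔ Submodule.span ℂ {((e, 0) : E × F)} with hM
    have hMnn : ∀ x ∈ M, 0 ≤ ‖x.1‖ ^ 2 - ‖x.2‖ ^ 2 := by
      intro x hx
      rw [hM, Submodule.mem_sup] at hx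
      obtain ⟨p, hp, q, hq, rfl⟩ := hx
      obtain ⟨c, rfl⟩ := Submodule.mem_span_singleton.mp hq
      have hp1D : p.1 ∈ D := ⟨p, hp, rfl⟩
      have horth : inner ℂ p.1 (c • e) = (0 : ℂ) := by
        rw [inner_smul_right, (Submodule.mem_orthogonal D e).mp heD p.1 hp1D, mul_zero]
      have h1 : (p + c • (e, 0)).1 = p.1 + c • e := rfl
      have h2 : (p + c • (e, 0)).2 = p.2 := by simp
      rw [h1, h2]
      have hns : ‖p.1 + c • e‖ ^ 2 = ‖p.1‖ ^ 2 + ‖c • e‖ ^ 2 := by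
        rw [@norm_add_sq ℂ _ _ _ _ p.1 (c • e), horth]
        simp
      nlinarith [hnonneg p hp, sq_nonneg ‖c • e‖]
    have hML : M = L := hmax M hMnn le_sup_left
    have he0 : ((e, 0) : E × F) ∈ L := by
      rw [← hML, hM]
      exact Submodule.mem_sup_right (Submodule.mem_span_singleton_self _)
    have heDmem : e ∈ D := ⟨(e, 0), he0, rfl⟩
    exact hene (inner_self_eq_zero.mp
      ((Submodule.mem_orthogonal D e).mp heD e heDmem))
  -- the bijection L → E
  set fL : L →ₗ[ℂ] E := (LinearMap.fst ℂ E F).comp L.subtype with hfL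
  have hker : ∀ p : L, (p : E × F).1 = 0 → p = 0 := by
    intro p hp1
    have h2 : ‖(p : E × F).2‖ ≤ 0 := by
      have := hb p p.2; rw [hp1] at this; simpa using this
    have : (p : E × F).2 = 0 := norm_le_zero_iff.mp h2
    ext
    · exact hp1
    · exact this
  have hbij : Function.Bijective fL := by
    constructor
    · intro p q hpq
      have : ((p - q : L) : E × F).1 = 0 := by
        have : (p : E × F).1 - (q : E × F).1 = 0 := sub_eq_zero.mpr hpq
        simpa using this
      have := hker _ this
      exact sub_eq_zero.mp this
    · intro x
      have : x ∈ D := hDtop ▸ Submodule.mem_top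
      obtain ⟨p, hp, hpx⟩ := this
      exact ⟨⟨p, hp⟩, hpx⟩
  set eL := LinearEquiv.ofBijective fL hbij with heL
  set K₀ : E →ₗ[ℂ] F := (LinearMap.snd ℂ E F).comp (L.subtype.comp eL.symm.toLinearMap) with hK₀
  have hfst : ∀ x : E, ((eL.symm x : L) : E × F).1 = x := by
    intro x
    exact eL.apply_symm_apply x
  have hK₀val : ∀ x : E, K₀ x = ((eL.symm x : L) : E × F).2 := fun x => rfl
  have hbound : ∀ x : E, ‖K₀ x‖ ≤ 1 * ‖x‖ := by
    intro x
    rw [one_mul, hK₀val]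
    have := hb _ (eL.symm x).2
    rwa [hfst x] at this
  refine ⟨K₀.mkContinuous 1 hbound, K₀.mkContinuous_norm_le zero_le_one hbound, ?_⟩
  have hcoe : ((K₀.mkContinuous 1 hbound : E →L[ℂ] F) : E →ₗ[ℂ] F) = K₀ :=
    LinearMap.mkContinuous_coe K₀ 1 hbound
  rw [hcoe]
  ext p
  rw [LinearMap.mem_graph_iff]
  constructor
  · intro hp
    have hmem : (p - ((eL.symm p.1 : L) : E × F)) ∈ L := sub_mem hp (eL.symm p.1).2
    have h1 : (p - ((eL.symm p.1 : L) : E × F)).1 = 0 := by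
      simp [hfst p.1]
    have := hker ⟨_, hmem⟩ h1
    have h2 : (p - ((eL.symm p.1 : L) : E × F)).2 = 0 := by
      have := congrArg (fun q : L => (q : E × F).2) this
      simpa using this
    have : p.2 = ((eL.symm p.1 : L) : E × F).2 := by
      have := sub_eq_zero.mp h2
      simpa using this
    rw [hK₀val]; exact this
  · intro hp
    have : p = ((eL.symm p.1 : L) : E × F) := by
      ext
      · exact (hfst p.1).symm
      · rw [hp, hK₀val]
    rw [this]
    exact (eL.symm p.1).2
end

section
/- With S = A₁₁ - A₁₂(A₂₂-μ)⁻¹A₂₁ and F = (A₂₂-μ)⁻¹A₂₁, for every x₊ ∈ H₊ the identity (S x₊, x₊) = (JA v, v) + μ (F x₊, F x₊) holds, where v = (x₊, -F x₊) and J(x₊,x₋) = (x₊, -x₋). -/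
/-- With `S = A₁₁ - A₁₂(A₂₂-μ)⁻¹A₂₁` and `F = (A₂₂-μ)⁻¹A₂₁`,
for every `xp ∈ H₊` one has `(S xp, xp) = (JAv, v) + μ (F xp, F xp)`, where
`v = (xp, -F xp)` and `J(xp,x₋) = (xp,-x₋)`. The pairing `(a,b)` is linear in
the first argument, i.e. `(a,b) = ⟪b,a⟫` in Mathlib's convention, and
`(JAv, v) = ((Av)₁, v₁) + (-(Av)₂, v₂)` componentwise. -/
theorem stmt12 {E F : Type*} [NormedAddCommGroup E] [InnerProductSpace ℂ E]
    [NormedAddCommGroup F] [InnerProductSpace ℂ F]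
    (A₁₁ : E →L[ℂ] E) (A₁₂ : F →L[ℂ] E) (A₂₁ : E →L[ℂ] F) (A₂₂ : F →L[ℂ] F)
    (μ : ℂ) (R : F →L[ℂ] F)
    (hR₁ : (A₂₂ - μ • 1) ∘L R = 1) (hR₂ : R ∘L (A₂₂ - μ • 1) = 1)
    (Fop : E →L[ℂ] F) (hF : Fop = R ∘L A₂₁)
    (S : E →L[ℂ] E) (hS : S = A₁₁ - A₁₂ ∘L R ∘L A₂₁)
    (xp : E) :
    (inner ℂ xp (S xp) : ℂ) =
      ((inner ℂ xp (A₁₁ xp + A₁₂ (-(Fop xp))) : ℂ)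
        + (inner ℂ (-(Fop xp)) (-(A₂₁ xp + A₂₂ (-(Fop xp)))) : ℂ))
      + μ * (inner ℂ (Fop xp) (Fop xp) : ℂ) := by
  have h1 : A₂₂ (Fop xp) = A₂₁ xp + μ • Fop xp := by
    have := congrArg (fun T : F →L[ℂ] F => T (A₂₁ xp)) hR₁
    simp only [ContinuousLinearMap.comp_apply, ContinuousLinearMap.sub_apply,
      ContinuousLinearMap.smul_apply, ContinuousLinearMap.one_apply, hF] at this ⊢
    linear_combination (norm := module) this
  have h2 : S xp = A₁₁ xp + A₁₂ (-(Fop xp)) := by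
    simp [hS, hF, sub_eq_add_neg]
  have h3 : A₂₁ xp + A₂₂ (-(Fop xp)) = -(μ • Fop xp) := by
    rw [map_neg, h1]; abel
  rw [h2, h3]
  simp [inner_smul_right]
end

section
/- Suppose A is dissipative in the Krein space H = H₊ ⊕ H₋ (i.e., Im (JAx, x) ≥ 0 for all x) and μ ∈ ℂ⁺ (Im μ > 0) with A₂₂ - μ boundedly invertible. Then the transfer function S = S(μ) = A₁₁ - A₁₂(A₂₂-μ)⁻¹A₂₁ is dissipative in H₊: Im (S x₊, x₊) ≥ 0 for all x₊ ∈ H₊. -/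
/-- If the block operator `A` is dissipative in the Krein space
`H = H₊ ⊕ H₋` (`Im (JAx, x) ≥ 0`, where `(a,b) = ⟪b,a⟫` is linear in the
first argument and `(JAx,x) = ((Ax)₁,x₊) - ((Ax)₂,x₋)`), and `Im μ > 0` with
`A₂₂ - μ` boundedly invertible, then the transfer function
`S(μ) = A₁₁ - A₁₂(A₂₂-μ)⁻¹A₂₁` is dissipative in `H₊`: `Im (Sx₊,x₊) ≥ 0`. -/
theorem stmt13 {E F : Type*} [NormedAddCommGroup E] [InnerProductSpace ℂ E]
    [NormedAddCommGroup F] [InnerProductSpace ℂ F]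
    (A₁₁ : E →L[ℂ] E) (A₁₂ : F →L[ℂ] E) (A₂₁ : E →L[ℂ] F) (A₂₂ : F →L[ℂ] F)
    (hdiss : ∀ (xp : E) (xm : F),
      0 ≤ ((inner ℂ xp (A₁₁ xp + A₁₂ xm) : ℂ) - (inner ℂ xm (A₂₁ xp + A₂₂ xm) : ℂ)).im)
    (μ : ℂ) (hμ : 0 < μ.im) (R : F →L[ℂ] F)
    (hR₁ : (A₂₂ - μ • 1) ∘L R = 1) (hR₂ : R ∘L (A₂₂ - μ • 1) = 1)
    (S : E →L[ℂ] E) (hS : S = A₁₁ - A₁₂ ∘L R ∘L A₂₁) :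
    ∀ xp : E, 0 ≤ (inner ℂ xp (S xp) : ℂ).im := by
  intro xp
  set xm : F := -(R (A₂₁ xp)) with hxm
  have hA : A₂₂ (R (A₂₁ xp)) = A₂₁ xp + μ • R (A₂₁ xp) := by
    have h := congrArg (fun T : F →L[ℂ] F => T (A₂₁ xp)) hR₁
    simp only [ContinuousLinearMap.comp_apply, ContinuousLinearMap.sub_apply,
      ContinuousLinearMap.smul_apply, ContinuousLinearMap.one_apply] at h
    linear_combination (norm := module) h
  have h1 := hdiss xp xm
  have hsum : A₂₁ xp + A₂₂ xm = μ • xm := by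
    simp only [hxm, map_neg, hA]
    module
  have hSx : S xp = A₁₁ xp + A₁₂ xm := by
    simp only [hS, hxm, ContinuousLinearMap.sub_apply, ContinuousLinearMap.comp_apply, map_neg]
    abel
  rw [hsum] at h1
  rw [hSx]
  have him : (inner ℂ xm (μ • xm) : ℂ).im = μ.im * ‖xm‖^2 := by
    simp only [inner_smul_right, ← RCLike.im_to_complex, RCLike.mul_im,
      inner_self_im, inner_self_eq_norm_sq]
    ring
  rw [Complex.sub_im, him] at h1
  nlinarith [sq_nonneg ‖xm‖, mul_nonneg (le_of_lt hμ) (sq_nonneg ‖xm‖)]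
end

section
/- Let A = [[A₁₁, A₁₂],[A₂₁, A₂₂]] be bounded on H₊ ⊕ H₋, μ with A₂₂ - μ invertible, F = (A₂₂-μ)⁻¹A₂₁, G = A₁₂(A₂₂-μ)⁻¹, S = A₁₁ - A₁₂(A₂₂-μ)⁻¹A₂₁, and K : H₊ → H₋ bounded. Then the graph of K is invariant under A if and only if (1 - KG)(A₂₂ - μ)(F + K) = K(S - μ). -/
/-!
Cancelling the resolvent by `(A₂₂ - μ)R = 1` and `R(A₂₂ - μ) = 1`, the left side minus the right
side is the Riccati defect `A₂₁ + A₂₂K - KA₁₁ - KA₁₂K`, whose value at `x` is the `H₋`-component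
of `A(x, Kx)` minus `K` applied to its `H₊`-component.
-/

open ContinuousLinearMap

section Schur

variable {𝕜 E F : Type*} [CommRing 𝕜]
  [TopologicalSpace E] [AddCommGroup E] [Module 𝕜 E] [IsTopologicalAddGroup E]
  [ContinuousConstSMul 𝕜 E]
  [TopologicalSpace F] [AddCommGroup F] [Module 𝕜 F] [IsTopologicalAddGroup F]
  [ContinuousConstSMul 𝕜 F]
  (A₁₁ : E →L[𝕜] E) (A₁₂ : F →L[𝕜] E) (A₂₁ : E →L[𝕜] F) (A₂₂ : F →L[𝕜] F) (K : E →L[𝕜] F)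

omit [ContinuousConstSMul 𝕜 E] [ContinuousConstSMul 𝕜 F] in
theorem graph_invariant_iff_riccati :
    (∀ x : E, A₂₁ x + A₂₂ (K x) = K (A₁₁ x + A₁₂ (K x))) ↔
      A₂₁ + A₂₂ ∘L K = K ∘L (A₁₁ + A₁₂ ∘L K) := by
  simp only [ContinuousLinearMap.ext_iff, add_apply, comp_apply]

theorem schur_riccati_factorization {μ : 𝕜} {R : F →L[𝕜] F}
    (hR₁ : (A₂₂ - μ • 1) ∘L R = 1) (hR₂ : R ∘L (A₂₂ - μ • 1) = 1) :
    (1 - K ∘L (A₁₂ ∘L R)) ∘L (A₂₂ - μ • 1) ∘L (R ∘L A₂₁ + K) =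
      K ∘L (A₁₁ - A₁₂ ∘L R ∘L A₂₁ - μ • 1) + (A₂₁ + A₂₂ ∘L K - K ∘L (A₁₁ + A₁₂ ∘L K)) := by
  set T := A₂₂ - μ • 1 with hT
  have hTR : ∀ y, T (R y) = y := fun y => congr($hR₁ y)
  have hRT : ∀ y, R (T y) = y := fun y => congr($hR₂ y)
  ext x
  simp only [comp_apply, add_apply, sub_apply, one_apply_eq_self, map_add, map_sub, hTR, hRT]
  simp only [hT, sub_apply, smul_apply, one_apply_eq_self, map_smul]
  abel

end Schur

/-- With `A = [[A₁₁,A₁₂],[A₂₁,A₂₂]]` bounded on `H₊ ⊕ H₋`,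
`A₂₂ - μ` boundedly invertible (inverse `R`), `F = RA₂₁`, `G = A₁₂R`,
`S = A₁₁ - A₁₂RA₂₁`, and `K : H₊ → H₋` bounded, the graph `{(x₊,Kx₊)}` is
`A`-invariant iff `(1 - KG)(A₂₂ - μ)(F + K) = K(S - μ)`. -/
theorem stmt18 {E F : Type*} [NormedAddCommGroup E] [InnerProductSpace ℂ E]
    [NormedAddCommGroup F] [InnerProductSpace ℂ F]
    (A₁₁ : E →L[ℂ] E) (A₁₂ : F →L[ℂ] E) (A₂₁ : E →L[ℂ] F) (A₂₂ : F →L[ℂ] F)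
    (μ : ℂ) (R : F →L[ℂ] F)
    (hR₁ : (A₂₂ - μ • 1) ∘L R = 1) (hR₂ : R ∘L (A₂₂ - μ • 1) = 1)
    (Fop : E →L[ℂ] F) (hF : Fop = R ∘L A₂₁)
    (G : F →L[ℂ] E) (hG : G = A₁₂ ∘L R)
    (S : E →L[ℂ] E) (hS : S = A₁₁ - A₁₂ ∘L R ∘L A₂₁)
    (K : E →L[ℂ] F) :
    (∀ xp : E, A₂₁ xp + A₂₂ (K xp) = K (A₁₁ xp + A₁₂ (K xp))) ↔
      (1 - K ∘L G) ∘L (A₂₂ - μ • 1) ∘L (Fop + K) = K ∘L (S - μ • 1) := by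
  subst hF hG hS
  rw [graph_invariant_iff_riccati, schur_riccati_factorization A₁₁ A₁₂ A₂₁ A₂₂ K hR₁ hR₂,
    add_eq_left, sub_eq_zero]
end
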